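/- With V, the complete flag {0} = V₀ ⊊ ⋯ ⊊ V_m = V, B ∈ (∧²V)* ∖ {0}, and the inductively defined subspaces p^k(B) and indices i_k := min{i : V_i ∩ p^{k−1}(B) ⊬_B p^{k−1}(B)} and j_k := min{j : V_j ∩ p^{k−1}(B) ⊄ p^k(B)} as above, one has i_k ∈ jump N(B) and j_k ∈ jump N(B); moreover i_k < j_k and i_k < i_{k+1}. -/

import Mathlib

open Module Filter Topology

noncomputable section

variable {𝕜 : Type} [RCLike 𝕜]

noncomputable instance grassmannianTopology {V : Type} [NormedAddCommGroup V]
    [InnerProductSpace 𝕜 V] [FiniteDimensional 𝕜 V] : TopologicalSpace (Submodule 𝕜 V) :=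
  TopologicalSpace.induced
    (fun W : Submodule 𝕜 V => (W.subtypeL.comp (W.orthogonalProjectionOnto) : V →L[𝕜] V))
    inferInstance

variable {V : Type} [NormedAddCommGroup V] [InnerProductSpace 𝕜 V] [FiniteDimensional 𝕜 V]

/-- `B` is a skew-symmetric bilinear form. -/
def IsSkew (B : V →L[𝕜] V →L[𝕜] 𝕜) : Prop := ∀ x y, B x y = - B y x

/-- `S^{⊥_B}`. -/
def perpB (B : V →L[𝕜] V →L[𝕜] 𝕜) (S : Submodule 𝕜 V) : Submodule 𝕜 V where
  carrier := {w | ∀ v ∈ S, B v w = 0}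
  add_mem' := by
    intro a b ha hb v hv
    simp [map_add, ha v hv, hb v hv]
  zero_mem' := by
    intro v hv
    simp
  smul_mem' := by
    intro c w hw v hv
    simp [hw v hv]

/-- The null space `N(B)`. -/
def nullSpace (B : V →L[𝕜] V →L[𝕜] 𝕜) : Submodule 𝕜 V := perpB B ⊤

/-- `S ⊥_B T`. -/
def IsOrthoPair (B : V →L[𝕜] V →L[𝕜] 𝕜) (S T : Submodule 𝕜 V) : Prop :=
  ∀ v ∈ S, ∀ w ∈ T, B v w = 0

/-- `W` is a `B`-isotropic subspace. -/
def IsIsotropic (B : V →L[𝕜] V →L[𝕜] 𝕜) (W : Submodule 𝕜 V) : Prop := IsOrthoPair B W W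


/-- `N(B_j)`, the null space of the restriction of `B` to `W × W`, regarded as a subspace
of `V`. -/
def nullIn (B : V →L[𝕜] V →L[𝕜] 𝕜) (W : Submodule 𝕜 V) : Submodule 𝕜 V :=
  perpB B W ⊓ W

/-- The index `i_{k+1} := min {i : V_i ∩ P ⊬_B P}` from the inductive construction, where
`P` stands for `p^k(B)` and the flag is encoded as `Vn : ℕ → Submodule 𝕜 V` (constantly
`V` beyond `m`). -/
noncomputable def iIdx (B : V →L[𝕜] V →L[𝕜] 𝕜) (Vn : ℕ → Submodule 𝕜 V)
    (P : Submodule 𝕜 V) : ℕ :=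
  sInf {i : ℕ | ¬ IsOrthoPair B (Vn i ⊓ P) P}

/-- One step of the inductive construction:
`p^{k+1}(B) := (V_{i_{k+1}} ∩ p^k(B))^{⊥_B} ∩ p^k(B)`. -/
noncomputable def pStep (B : V →L[𝕜] V →L[𝕜] 𝕜) (Vn : ℕ → Submodule 𝕜 V)
    (P : Submodule 𝕜 V) : Submodule 𝕜 V :=
  perpB B (Vn (iIdx B Vn P) ⊓ P) ⊓ P

/-- The sequence `p⁰(B) = V, p¹(B), p²(B), …` of the inductive construction. -/
noncomputable def pSeq (B : V →L[𝕜] V →L[𝕜] 𝕜) (Vn : ℕ → Submodule 𝕜 V) :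
    ℕ → Submodule 𝕜 V
  | 0 => ⊤
  | k + 1 => pStep B Vn (pSeq B Vn k)

/-- The index `j_{k+1} := min {j : V_j ∩ p^k(B) ⊄ p^{k+1}(B)}`, where `P` stands for
`p^k(B)`. -/
noncomputable def jIdx (B : V →L[𝕜] V →L[𝕜] 𝕜) (Vn : ℕ → Submodule 𝕜 V)
    (P : Submodule 𝕜 V) : ℕ :=
  sInf {j : ℕ | ¬ Vn j ⊓ P ≤ pStep B Vn P}

/-- The jump set `jump W := {j ∈ {1, …, m} : V_j ⊄ V_{j-1} + W}`. -/
def jumpSetN (m : ℕ) (Vn : ℕ → Submodule 𝕜 V) (W : Submodule 𝕜 V) : Set ℕ :=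
  {j | 1 ≤ j ∧ j ≤ m ∧ ¬ Vn j ≤ Vn (j - 1) ⊔ W}

/-- The subspace `p(B) := N(B₁) + ⋯ + N(B_m)` where `B_j := B|_{V_j × V_j}`. -/
noncomputable def lagSumN (m : ℕ) (Vn : ℕ → Submodule 𝕜 V) (B : V →L[𝕜] V →L[𝕜] 𝕜) :
    Submodule 𝕜 V :=
  ∑ j ∈ Finset.Icc 1 m, nullIn B (Vn j)


set_option linter.unusedSectionVars false

section Aux
variable {B : V →L[𝕜] V →L[𝕜] 𝕜} {S T P : Submodule 𝕜 V}

lemma mem_perpB {w : V} : w ∈ perpB B S ↔ ∀ v ∈ S, B v w = 0 := Iff.rfl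

lemma mem_nullSpace {w : V} : w ∈ nullSpace B ↔ ∀ v, B v w = 0 := by
  simp [nullSpace, mem_perpB]

lemma skew_self (hB : IsSkew B) (v : V) : B v v = 0 := by
  linear_combination (hB v v) / 2

lemma nullSpace_le_perpB : nullSpace B ≤ perpB B S := by
  intro w hw v _
  exact mem_nullSpace.mp hw v

lemma nullSpace_le_pSeq (Vn : ℕ → Submodule 𝕜 V) (k : ℕ) :
    nullSpace B ≤ pSeq B Vn k := by
  induction k with
  | zero => exact le_top
  | succ k ih => exact le_inf nullSpace_le_perpB ih

lemma le_perpB_iff : P ≤ perpB B S ↔ IsOrthoPair B S P := by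
  constructor
  · intro h v hv w hw
    exact (h hw) v hv
  · intro h w hw v hv
    exact h v hv w hw

end Aux

/-- With the inductive construction (here stated with the index shift
`i_{k+1} = iIdx B Vn (p^k(B))`, `j_{k+1} = jIdx B Vn (p^k(B))`, valid whenever `p^k(B)`
is not `B`-isotropic): the indices `i_{k+1}` and `j_{k+1}` belong to `jump N(B)`;
moreover `i_{k+1} < j_{k+1}`, and `i_{k+1} < i_{k+2}` (the latter whenever `p^{k+1}(B)`
is not `B`-isotropic, so that `i_{k+2}` is defined). -/
theorem iIdx_jIdx_mem_jump_nullSpace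
    (m : ℕ) (hm : finrank 𝕜 V = m)
    (Vn : ℕ → Submodule 𝕜 V) (hV0 : Vn 0 = ⊥) (hmono : Monotone Vn)
    (hrank : ∀ j ≤ m, finrank 𝕜 (Vn j) = j) (htop : ∀ j, m ≤ j → Vn j = ⊤)
    (B : V →L[𝕜] V →L[𝕜] 𝕜) (hB : IsSkew B) (hB0 : B ≠ 0)
    (k : ℕ) (hk : ¬ IsIsotropic B (pSeq B Vn k)) :
    iIdx B Vn (pSeq B Vn k) ∈ jumpSetN m Vn (nullSpace B) ∧
    jIdx B Vn (pSeq B Vn k) ∈ jumpSetN m Vn (nullSpace B) ∧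
    iIdx B Vn (pSeq B Vn k) < jIdx B Vn (pSeq B Vn k) ∧
    (¬ IsIsotropic B (pSeq B Vn (k + 1)) →
      iIdx B Vn (pSeq B Vn k) < iIdx B Vn (pSeq B Vn (k + 1))) := by
  set P := pSeq B Vn k with hP
  set i := iIdx B Vn P with hi
  have hmSetI : ¬ IsOrthoPair B (Vn m ⊓ P) P := by
    rw [htop m le_rfl, top_inf_eq]; exact hk
  have hi_mem : ¬ IsOrthoPair B (Vn i ⊓ P) P := by
    rw [hi, iIdx]
    exact Nat.sInf_mem (s := {n : ℕ | ¬ IsOrthoPair B (Vn n ⊓ P) P}) ⟨m, hmSetI⟩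
  have hi_le : i ≤ m := by
    rw [hi, iIdx]
    exact Nat.sInf_le (s := {n : ℕ | ¬ IsOrthoPair B (Vn n ⊓ P) P}) hmSetI
  have hi_pos : 1 ≤ i := by
    rcases Nat.eq_zero_or_pos i with h0 | h
    · exfalso; apply hi_mem; rw [h0, hV0, bot_inf_eq]
      intro v hv w hw
      have : v = 0 := by simpa using hv
      simp [this]
    · exact h
  have hmin_i : ∀ l, l < i → IsOrthoPair B (Vn l ⊓ P) P := by
    intro l hl
    by_contra h
    rw [hi, iIdx] at hl
    exact (Nat.sInf_le (s := {n : ℕ | ¬ IsOrthoPair B (Vn n ⊓ P) P}) h).not_gt hl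
  have hiso : IsIsotropic B (Vn i ⊓ P) := by
    intro v hv w hw
    by_cases hv' : v ∈ Vn (i - 1)
    · exact hmin_i (i - 1) (by omega) v ⟨hv', hv.2⟩ w hw.2
    · have hsp : Vn (i - 1) ⊔ Submodule.span 𝕜 {v} ≤ Vn i :=
        sup_le (hmono (by omega)) ((Submodule.span_singleton_le_iff_mem _ _).mpr hv.1)
      have hvmem : v ∈ Vn (i - 1) ⊔ Submodule.span 𝕜 {v} :=
        Submodule.mem_sup_right (Submodule.mem_span_singleton_self v)
      have hlt : Vn (i - 1) < Vn (i - 1) ⊔ Submodule.span 𝕜 {v} :=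
        lt_of_le_of_ne le_sup_left (fun h => hv' (by rw [h]; exact hvmem))
      have heq : Vn (i - 1) ⊔ Submodule.span 𝕜 {v} = Vn i := by
        apply Submodule.eq_of_le_of_finrank_le hsp
        have h1 : finrank 𝕜 (Vn (i - 1)) < finrank 𝕜 ↥(Vn (i - 1) ⊔ Submodule.span 𝕜 {v}) :=
          Submodule.finrank_lt_finrank_of_lt hlt
        rw [hrank i hi_le]
        rw [hrank (i - 1) (by omega)] at h1
        omega
      have hw' : w ∈ Vn (i - 1) ⊔ Submodule.span 𝕜 {v} := by rw [heq]; exact hw.1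
      rcases Submodule.mem_sup.mp hw' with ⟨u, hu, z, hz, huz⟩
      rcases Submodule.mem_span_singleton.mp hz with ⟨c, rfl⟩
      have huP : u ∈ P := by
        have h2 : u = w - c • v := by rw [← huz]; abel
        rw [h2]; exact sub_mem hw.2 (Submodule.smul_mem _ _ hv.2)
      have h1 : B u v = 0 := hmin_i (i - 1) (by omega) u ⟨hu, huP⟩ v hv.2
      have h3 : B v w = B v u + c * B v v := by
        rw [← huz]; simp
      rw [h3, hB v u, h1, skew_self hB]; ring
  have hstep : Vn i ⊓ P ≤ pStep B Vn P := by
    intro w hw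
    exact ⟨fun v hv => hiso v hv w hw, hw.2⟩
  set j := jIdx B Vn P with hj
  have hmSetJ : ¬ (Vn m ⊓ P ≤ pStep B Vn P) := by
    rw [htop m le_rfl, top_inf_eq]
    intro h
    exact hi_mem (le_perpB_iff.mp (h.trans inf_le_left))
  have hj_mem : ¬ (Vn j ⊓ P ≤ pStep B Vn P) := by
    rw [hj, jIdx]
    exact Nat.sInf_mem (s := {n : ℕ | ¬ Vn n ⊓ P ≤ pStep B Vn P}) ⟨m, hmSetJ⟩
  have hj_le : j ≤ m := by
    rw [hj, jIdx]
    exact Nat.sInf_le (s := {n : ℕ | ¬ Vn n ⊓ P ≤ pStep B Vn P}) hmSetJ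
  have hj_pos : 1 ≤ j := by
    rcases Nat.eq_zero_or_pos j with h0 | h
    · exfalso; apply hj_mem; rw [h0, hV0, bot_inf_eq]; exact bot_le
    · exact h
  have hmin_j : ∀ l, l < j → Vn l ⊓ P ≤ pStep B Vn P := by
    intro l hl
    by_contra h
    rw [hj, jIdx] at hl
    exact (Nat.sInf_le (s := {n : ℕ | ¬ Vn n ⊓ P ≤ pStep B Vn P}) h).not_gt hl
  have hij : i < j := by
    by_contra h
    push_neg at h
    exact hj_mem ((inf_le_inf_right P (hmono h)).trans hstep)
  have hjumpI : i ∈ jumpSetN m Vn (nullSpace B) := by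
    refine ⟨hi_pos, hi_le, ?_⟩
    intro hle
    apply hi_mem
    intro v hv w hw
    rcases Submodule.mem_sup.mp (hle hv.1) with ⟨v', hv', n, hn, hsum⟩
    have hnP : n ∈ P := nullSpace_le_pSeq Vn k hn
    have hv'P : v' ∈ P := by
      have h2 : v' = v - n := by rw [← hsum]; abel
      rw [h2]; exact sub_mem hv.2 hnP
    have h1 : B v' w = 0 := hmin_i (i - 1) (by omega) v' ⟨hv', hv'P⟩ w hw
    have h2 : B n w = 0 := by rw [hB n w, mem_nullSpace.mp hn w]; ring
    calc B v w = B (v' + n) w := by rw [hsum]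
    _ = 0 := by rw [map_add, ContinuousLinearMap.add_apply, h1, h2, add_zero]
  have hjumpJ : j ∈ jumpSetN m Vn (nullSpace B) := by
    refine ⟨hj_pos, hj_le, ?_⟩
    intro hle
    apply hj_mem
    intro x hx
    rcases Submodule.mem_sup.mp (hle hx.1) with ⟨x', hx', n, hn, hsum⟩
    have hnP : n ∈ pStep B Vn P :=
      ⟨fun v _ => mem_nullSpace.mp hn v, nullSpace_le_pSeq Vn k hn⟩
    have hx'P : x' ∈ P := by
      have h2 : x' = x - n := by rw [← hsum]; abel
      rw [h2]; exact sub_mem hx.2 hnP.2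
    have hx'mem : x' ∈ pStep B Vn P := hmin_j (j - 1) (by omega) ⟨hx', hx'P⟩
    rw [← hsum]; exact add_mem hx'mem hnP
  refine ⟨hjumpI, hjumpJ, hij, ?_⟩
  intro hk'
  have hP'eq : pSeq B Vn (k + 1) = pStep B Vn P := rfl
  have hmSetI' : ¬ IsOrthoPair B (Vn m ⊓ pSeq B Vn (k + 1)) (pSeq B Vn (k + 1)) := by
    rw [htop m le_rfl, top_inf_eq]; exact hk'
  have hi'_mem : ¬ IsOrthoPair B (Vn (iIdx B Vn (pSeq B Vn (k + 1))) ⊓ pSeq B Vn (k + 1))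
      (pSeq B Vn (k + 1)) := by
    show _ ∈ {n : ℕ | ¬ IsOrthoPair B (Vn n ⊓ pSeq B Vn (k + 1)) (pSeq B Vn (k + 1))}
    rw [iIdx]
    exact Nat.sInf_mem ⟨m, hmSetI'⟩
  by_contra h
  push_neg at h
  apply hi'_mem
  intro v hv w hw
  have hw2 : w ∈ perpB B (Vn i ⊓ P) ⊓ P := by
    have h2 : w ∈ pStep B Vn P := by rw [← hP'eq]; exact hw
    rw [hi]; exact h2
  have hv2 : v ∈ perpB B (Vn i ⊓ P) ⊓ P := by
    have h2 : v ∈ pStep B Vn P := by rw [← hP'eq]; exact hv.2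
    rw [hi]; exact h2
  exact hw2.1 v ⟨hmono h hv.1, hv2.2⟩
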